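/- For n ≥ 4, the automorphism group of the semidihedral group of order 2^n is a 2-group. -/
import Mathlib


/-- For `n ≥ 4`, the automorphism group of the semidihedral group of order `2^n`
is a `2`-group. -/
theorem semidihedral_aut_is_two_group (n : ℕ) (hn : 4 ≤ n) (G : Type*) [Group G] [Fintype G]
    (s t : G) (hcard : Fintype.card G = 2 ^ n)
    (hs : orderOf s = 2 ^ (n - 1)) (ht : orderOf t = 2)
    (hrel : t * s * t = s ^ (2 ^ (n - 2) - 1))
    (hgen : Subgroup.closure {s, t} = ⊤) :
    IsPGroup 2 (MulAut G) := by
  classical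
  set m : ℕ := 2 ^ (n - 2) with hm
  set P : ℕ := 2 ^ (n - 1) with hP
  have hm4 : 4 ≤ m := by
    calc (4:ℕ) = 2 ^ 2 := rfl
    _ ≤ 2 ^ (n - 2) := Nat.pow_le_pow_right (by norm_num) (by omega)
  have h2m : 2 * m = P := by
    rw [hm, hP, ← pow_succ']
    congr 1
    omega
  have hP8 : 8 ≤ P := by omega
  have htt : t * t = 1 := by
    have := pow_orderOf_eq_one t
    rwa [ht, sq] at this
  have htinv : t⁻¹ = t := by
    rw [inv_eq_iff_mul_eq_one, htt]
  have htt' : ∀ x : G, t * (t * x) = x := by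
    intro x; rw [← mul_assoc, htt, one_mul]
  have hsP : s ^ P = 1 := by rw [← hs]; exact pow_orderOf_eq_one s
  set H := Subgroup.zpowers s with hH
  have hmemH : ∀ g : G, g ∈ H ↔ ∃ a : ℕ, s ^ a = g := by
    intro g
    rw [hH, ← mem_powers_iff_mem_zpowers]
    exact Submonoid.mem_powers_iff g s
  have hconj : ∀ a : ℕ, t * s ^ a * t = s ^ ((m - 1) * a) := by
    intro a
    have h1 : t * s ^ a * t = (t * s * t⁻¹) ^ a := by
      rw [conj_pow, htinv]
    rw [h1, htinv, hrel, ← pow_mul]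
  have hsq : ∀ a : ℕ, (s ^ a * t) ^ 2 = s ^ (m * a) := by
    intro a
    have key : a + (m - 1) * a = m * a := by
      have h1 : m - 1 + 1 = m := by omega
      calc a + (m - 1) * a = (m - 1 + 1) * a := by ring
      _ = m * a := by rw [h1]
    calc (s ^ a * t) ^ 2 = s ^ a * (t * s ^ a * t) := by
          rw [sq]; group
    _ = s ^ a * s ^ ((m - 1) * a) := by rw [hconj]
    _ = s ^ (a + (m - 1) * a) := by rw [pow_add]
    _ = s ^ (m * a) := by rw [key]
  have h4 : ∀ a : ℕ, (s ^ a * t) ^ 4 = 1 := by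
    intro a
    have : (4:ℕ) = 2 * 2 := rfl
    rw [this, pow_mul, hsq, ← pow_mul]
    have : m * a * 2 = P * a := by rw [← h2m]; ring
    rw [this, pow_mul, hsP, one_pow]
  -- decomposition of G
  have hdec : ∀ g : G, g ∈ H ∨ g * t ∈ H := by
    have hHc : ∀ g ∈ H, t * g * t ∈ H := by
      intro g hg
      obtain ⟨a, rfl⟩ := (hmemH g).1 hg
      rw [hconj]
      exact (hmemH _).2 ⟨_, rfl⟩
    let K : Subgroup G :=
      { carrier := {g : G | g ∈ H ∨ g * t ∈ H}
        one_mem' := Or.inl H.one_mem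
        mul_mem' := by
          rintro a b (ha | ha) (hb | hb)
          · exact Or.inl (H.mul_mem ha hb)
          · refine Or.inr ?_
            rw [mul_assoc]
            exact H.mul_mem ha hb
          · refine Or.inr ?_
            have key : (a * t) * (t * b * t) = a * b * t := by
              simp [mul_assoc, htt', htt]
            rw [← key]
            exact H.mul_mem ha (hHc b hb)
          · refine Or.inl ?_
            have key : (a * t) * (t * (b * t) * t) = a * b := by
              simp [mul_assoc, htt', htt]
            rw [← key]
            exact H.mul_mem ha (hHc _ hb)
        inv_mem' := by
          rintro a (ha | ha)
          · exact Or.inl (H.inv_mem ha)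
          · refine Or.inr ?_
            have key : t * (a * t)⁻¹ * t = a⁻¹ * t := by
              simp [mul_inv_rev, htinv, mul_assoc, htt']
            rw [← key]
            exact hHc _ (H.inv_mem ha) }
    have hle : Subgroup.closure {s, t} ≤ K := by
      rw [Subgroup.closure_le, Set.insert_subset_iff, Set.singleton_subset_iff]
      constructor
      · exact Or.inl (Subgroup.mem_zpowers s)
      · exact Or.inr (by rw [htt]; exact H.one_mem)
    intro g
    exact hle (hgen ▸ Subgroup.mem_top g)
  have htH : t ∉ H := by
    intro hmem
    have hle : Subgroup.closure {s, t} ≤ H := by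
      rw [Subgroup.closure_le, Set.insert_subset_iff, Set.singleton_subset_iff]
      exact ⟨Subgroup.mem_zpowers s, hmem⟩
    rw [hgen] at hle
    have hcards : Nat.card H = Nat.card G := by
      rw [top_le_iff.mp hle, Subgroup.card_top]
    rw [hH, Nat.card_zpowers, hs, Nat.card_eq_fintype_card, hcard] at hcards
    have : (2:ℕ) ^ n = 2 * 2 ^ (n - 1) := by
      rw [← pow_succ']
      congr 1
      omega
    omega
  -- general facts about automorphisms
  have hclosure : ∀ χ : MulAut G, Subgroup.closure {χ s, χ t} = ⊤ := by
    intro χ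
    have h1 := Subgroup.map_top_of_surjective χ.toMonoidHom χ.surjective
    have h2 : Subgroup.closure {χ s, χ t} = Subgroup.map χ.toMonoidHom (Subgroup.closure {s, t}) := by
      rw [MonoidHom.map_closure]
      congr 1
      simp [Set.image_insert_eq]
    rw [h2, hgen, h1]
  have horder : ∀ χ : MulAut G, ∀ g : G, orderOf (χ g) = orderOf g := by
    intro χ g
    exact orderOf_injective χ.toMonoidHom χ.injective g
  have haux : ∀ χ : MulAut G, χ s ∈ H → ∃ b : ℕ, χ t = s ^ b * t ∧ s ^ (m * b) = 1 := by
    intro χ hχs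
    have h1 : χ t ∉ H := by
      intro hmem
      apply htH
      have hle : Subgroup.closure {χ s, χ t} ≤ H := by
        rw [Subgroup.closure_le]
        rintro x (rfl | rfl)
        · exact hχs
        · exact hmem
      rw [hclosure χ] at hle
      exact hle (Subgroup.mem_top t)
    rcases hdec (χ t) with h | h
    · exact absurd h h1
    obtain ⟨b, hb⟩ := (hmemH _).1 h
    have hbt : χ t = s ^ b * t := by
      rw [hb, mul_assoc, htt, mul_one]
    refine ⟨b, hbt, ?_⟩
    have h2 : (χ t) ^ 2 = 1 := by
      rw [← ht, ← horder χ t]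
      exact pow_orderOf_eq_one _
    rw [hbt, hsq] at h2
    exact h2
  -- now the main argument
  intro φ
  -- φ s ∈ H
  have hφs : φ s ∈ H := by
    rcases hdec (φ s) with h | h
    · exact h
    · exfalso
      obtain ⟨a, ha⟩ := (hmemH _).1 h
      have hfs : φ s = s ^ a * t := by rw [ha, mul_assoc, htt, mul_one]
      have h4' : (φ s) ^ 4 = 1 := by rw [hfs]; exact h4 a
      have hdvd : orderOf (φ s) ∣ 4 := orderOf_dvd_of_pow_eq_one h4'
      rw [horder φ s, hs] at hdvd
      have := Nat.le_of_dvd (by norm_num) hdvd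
      omega
  obtain ⟨i, hi⟩ := (hmemH _).1 hφs
  -- coprimality of i with P
  have hiP : Nat.Coprime i P := by
    have h1 : orderOf (s ^ i) = P := by rw [hi, horder φ s, hs]
    rw [orderOf_pow, hs] at h1
    have hgd : Nat.gcd P i ∣ P := Nat.gcd_dvd_left P i
    rcases (Nat.div_eq_self).mp h1 with h | h
    · exact absurd h (Nat.lt_of_lt_of_le (by norm_num) hP8).ne'
    · exact Nat.coprime_comm.mp h
  haveI : NeZero P := ⟨by positivity⟩
  have hcardu : Fintype.card (ZMod P)ˣ = m := by
    rw [ZMod.card_units_eq_totient, hP, Nat.totient_prime_pow Nat.prime_two (by omega : 0 < n - 1)]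
    have h11 : n - 1 - 1 = n - 2 := by omega
    rw [h11, hm]
    norm_num
  have humod : i ^ m ≡ 1 [MOD P] := by
    have hu : (ZMod.unitOfCoprime i hiP) ^ m = 1 := by
      rw [← hcardu]
      exact pow_card_eq_one
    have hu2 : ((i : ZMod P)) ^ m = 1 := by
      have := congrArg (Units.val) hu
      rwa [Units.val_pow_eq_pow_val, ZMod.coe_unitOfCoprime, Units.val_one] at this
    rw [← ZMod.natCast_eq_natCast_iff]
    push_cast
    rw [hu2]
  have hpowim : s ^ (i ^ m) = s := by
    have : s ^ (i ^ m) = s ^ 1 := by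
      rw [pow_eq_pow_iff_modEq, hs]
      exact humod
    rwa [pow_one] at this
  -- iterate φ
  have hiter : ∀ k : ℕ, (φ ^ k) s = s ^ (i ^ k) := by
    intro k
    induction k with
    | zero => simp
    | succ k ih =>
      calc (φ ^ (k + 1)) s = φ ((φ ^ k) s) := by rw [pow_succ', MulAut.mul_apply]
      _ = φ (s ^ i ^ k) := by rw [ih]
      _ = (φ s) ^ i ^ k := by rw [map_pow]
      _ = (s ^ i) ^ i ^ k := by rw [← hi]
      _ = s ^ i ^ (k + 1) := by rw [← pow_mul, ← pow_succ']
  set ψ : MulAut G := φ ^ m with hψ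
  have hψs : ψ s = s := by rw [hψ, hiter m, hpowim]
  have hψks : ∀ k : ℕ, (ψ ^ k) s = s := by
    intro k
    induction k with
    | zero => simp
    | succ k ih => rw [pow_succ, MulAut.mul_apply, hψs, ih]
  obtain ⟨b, hψt, hbm⟩ := haux ψ (by rw [hψs]; exact Subgroup.mem_zpowers s)
  have hiter2 : ∀ k : ℕ, (ψ ^ k) t = s ^ (k * b) * t := by
    intro k
    induction k with
    | zero => simp
    | succ k ih =>
      calc (ψ ^ (k + 1)) t = ψ ((ψ ^ k) t) := by rw [pow_succ', MulAut.mul_apply]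
      _ = ψ (s ^ (k * b) * t) := by rw [ih]
      _ = (ψ s) ^ (k * b) * ψ t := by rw [map_mul, map_pow]
      _ = s ^ (k * b) * (s ^ b * t) := by rw [hψs, hψt]
      _ = s ^ ((k + 1) * b) * t := by rw [← mul_assoc, ← pow_add]; congr 2; ring
  have hψm : ψ ^ m = 1 := by
    have hfix : ∀ x : G, (ψ ^ m) x = x := by
      have hle : Subgroup.closure {s, t} ≤ MonoidHom.eqLocus (ψ ^ m : MulAut G).toMonoidHom (MonoidHom.id G) := by
        rw [Subgroup.closure_le, Set.insert_subset_iff, Set.singleton_subset_iff]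
        constructor
        · show (ψ ^ m) s = s
          exact hψks m
        · show (ψ ^ m) t = t
          rw [hiter2 m, hbm, one_mul]
      intro x
      exact hle (hgen ▸ Subgroup.mem_top x)
    exact MulEquiv.ext fun x => hfix x
  refine ⟨2 * (n - 2), ?_⟩
  have hexp : (2:ℕ) ^ (2 * (n - 2)) = m * m := by
    rw [two_mul, pow_add, hm]
  rw [hexp, pow_mul, ← hψ, hψm]
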